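/- arXiv:2007.04114 — 3 statements merged into one kernel-verified Lean document; each statement's English description precedes it below -/
import Mathlib

section
/- Let q be a prime power, d = (d_1,...,d_k) a k-tuple of divisors d_i > 1 of q−1, and let P = (P_1,...,P_k) be a k-tuple of nonzero polynomials in F_q[x] that is d-multiplicatively independent over F_q. Then for every positive integer t, the tuple P (with the polynomials viewed as elements of F_{q^t}[x]) is d-multiplicatively independent over F_{q^t}. -/
open Polynomial

/-- A `k`-tuple `P` of polynomials over `F` is `d`-multiplicatively independent over `F`. -/
def MultIndep {F : Type*} [Field F] {k : ℕ} (d : Fin k → ℕ) (P : Fin k → Polynomial F) : Prop :=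
  ∀ a : Fin k → ℕ, (∀ i, a i < d i) →
    ∀ (u : Fˣ) (G : Polynomial F), G.Monic →
      (∏ i, P i ^ ((Finset.univ.lcm d / d i) * a i)) =
        Polynomial.C (u : F) * G ^ (Finset.univ.lcm d) →
      (∀ i, a i = 0) ∧ G = 1 ∧ u = 1

/-!
Extensions of finite fields are Galois, and over a Galois extension `E/F` a solution
`∏ Pᵢ ^ (L / dᵢ * aᵢ) = u • G ^ L` descends to `F`: every `σ ∈ Gal(E/F)` fixes the left side,
so `σ G` and `G` are monic `L`-th roots of the same polynomial, hence equal. Thus `G` has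
coefficients in `F`, and so does `u`, the leading coefficient of the left side.
-/

theorem Polynomial.Monic.eq_of_pow_eq {K : Type*} [Field K] {G H : K[X]} (hG : G.Monic)
    (hH : H.Monic) {n : ℕ} (hn : n ≠ 0) (h : G ^ n = H ^ n) : G = H :=
  eq_of_monic_of_associated hG hH <| associated_of_dvd_dvd
    ((UniqueFactorizationMonoid.pow_dvd_pow_iff_dvd hn).1 h.dvd)
    ((UniqueFactorizationMonoid.pow_dvd_pow_iff_dvd hn).1 h.symm.dvd)

theorem Polynomial.Monic.mem_lifts_of_pow_mem_lifts {F E : Type*} [Field F] [Field E]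
    [Algebra F E] [IsGalois F E] {G : E[X]} (hG : G.Monic) {n : ℕ} (hn : n ≠ 0)
    (h : G ^ n ∈ lifts (algebraMap F E)) : G ∈ lifts (algebraMap F E) := by
  obtain ⟨M, hM⟩ := h
  have hfixed (σ : Gal(E/F)) : G.map (σ : E →+* E) = G := by
    refine (hG.map _).eq_of_pow_eq hG hn ?_
    rw [← Polynomial.map_pow, ← hM, coe_mapRingHom, Polynomial.map_map]
    exact congrArg (M.map ·) (RingHom.ext σ.commutes)
  refine lifts_iff_coeff_lifts _ |>.2 fun m ↦ ?_
  refine (InfiniteGalois.mem_range_algebraMap_iff_fixed _).2 fun σ ↦ ?_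
  exact (coeff_map _ _).symm.trans (congrArg (coeff · m) (hfixed σ))

theorem Polynomial.exists_eq_C_mul_pow_of_map_eq_C_mul_pow {F E : Type*} [Field F] [Field E]
    [Algebra F E] [IsGalois F E] {Q : F[X]} {u : E} (hu : u ≠ 0) {G : E[X]} (hG : G.Monic)
    {n : ℕ} (hn : n ≠ 0) (h : Q.map (algebraMap F E) = C u * G ^ n) :
    ∃ (c : F) (G' : F[X]), Q = C c * G' ^ n ∧ G'.Monic ∧
      G = G'.map (algebraMap F E) ∧ u = algebraMap F E c := by
  set c := Q.leadingCoeff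
  have hc : algebraMap F E c = u := by
    simpa only [leadingCoeff_map, leadingCoeff_mul, leadingCoeff_C, (hG.pow n).leadingCoeff,
      mul_one] using congrArg leadingCoeff h
  have hlifts : G ^ n ∈ lifts (algebraMap F E) :=
    ⟨C c⁻¹ * Q, by rw [coe_mapRingHom, Polynomial.map_mul, h, map_C, map_inv₀, hc, ← mul_assoc,
      ← C_mul, inv_mul_cancel₀ hu, C_1, one_mul]⟩
  obtain ⟨G', hG'map, -, hG'⟩ :=
    lifts_and_degree_eq_and_monic (hG.mem_lifts_of_pow_mem_lifts hn hlifts) hG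
  refine ⟨c, G', map_injective _ (algebraMap F E).injective ?_, hG', hG'map.symm, hc.symm⟩
  rw [h, Polynomial.map_mul, map_C, hc, Polynomial.map_pow, hG'map]

theorem MultIndep.map_algebraMap {F E : Type*} [Field F] [Field E] [Algebra F E] [IsGalois F E]
    {k : ℕ} {d : Fin k → ℕ} {P : Fin k → F[X]} (hP : MultIndep d P) :
    MultIndep d (fun i ↦ (P i).map (algebraMap F E)) := by
  intro a ha u G hG heq
  have hL : Finset.univ.lcm d ≠ 0 := by
    rw [Ne, Finset.lcm_eq_zero_iff]
    rintro ⟨i, -, hi⟩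
    exact (ha i).ne_bot hi
  simp only [← Polynomial.map_pow, ← Polynomial.map_prod] at heq
  obtain ⟨c, G', hQ, hG', rfl, hu⟩ :=
    exists_eq_C_mul_pow_of_map_eq_C_mul_pow u.ne_zero hG hL heq
  have hc : c ≠ 0 := by rintro rfl; simp [u.ne_zero] at hu
  obtain ⟨ha0, rfl, hunit⟩ := hP a ha (Units.mk0 c hc) G' hG' hQ
  have hc1 : c = 1 := congrArg Units.val hunit
  exact ⟨ha0, Polynomial.map_one _, Units.ext (by rw [hu, hc1, map_one, Units.val_one])⟩

theorem stmt3_general {F E : Type*} [Field F] [Field E] [Fintype E] [Algebra F E]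
    (k : ℕ) (d : Fin k → ℕ)
    (P : Fin k → Polynomial F)
    (hindep : MultIndep d P) :
    MultIndep d (fun i => (P i).map (algebraMap F E)) :=
  hindep.map_algebraMap

theorem stmt3 {F E : Type*} [Field F] [Fintype F] [Field E] [Fintype E] [Algebra F E]
    (q t : ℕ) (hq : Fintype.card F = q) (ht : 0 < t) (hE : Fintype.card E = q ^ t)
    (k : ℕ) (d : Fin k → ℕ) (hd1 : ∀ i, 1 < d i) (hdvd : ∀ i, d i ∣ q - 1)
    (P : Fin k → Polynomial F) (hP0 : ∀ i, P i ≠ 0)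
    (hindep : MultIndep d P) :
    MultIndep d (fun i => (P i).map (algebraMap F E)) :=
  stmt3_general k d P hindep
end

section
/- Let d > 1 be a positive integer and let f ∈ Z[x] be a polynomial that is not of the form a·g(x)^d with a ∈ Z and g ∈ Z[x]. Then there exists M such that for every prime p > M, the reduction f(x) mod p ∈ F_p[x] is not of the form a·g(x)^d with a ∈ F_p and g ∈ F_p[x]. -/
/-!
If `f` is not a constant times a `d`-th power, some irreducible `q` of positive degree occurs in `f`
with multiplicity `e` not divisible by `d`: `f = q ^ e * h` with `q ∤ h`. By Gauss's lemma `q` stays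
irreducible over `ℚ`, so it is coprime there to `h` and to `q'`, and resultants turn this into integer
Bézout identities `q U₁ + h V₁ = N₁` and `q U₂ + q' V₂ = N₂` with `N₁ N₂ ≠ 0`. For `p` dividing
neither `N₁ N₂` nor the leading coefficient of `q`, the reduction of `q` is nonconstant, squarefree
and coprime to that of `h`, so each of its irreducible factors divides `f mod p` exactly `e` times,
which is impossible for `a * g ^ d`.
-/

open Polynomial UniqueFactorizationMonoid

section Multiplicity

variable {α : Type*} [CommMonoidWithZero α] [IsCancelMulZero α]

theorem emultiplicity_pow_mul_of_not_dvd {r u : α} (hr : r ≠ 0) (hu : ¬ r ∣ u) (n : ℕ) :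
    emultiplicity r (r ^ n * u) = n :=
  emultiplicity_eq_of_dvd_of_not_dvd (dvd_mul_right _ _) <| by
    rwa [pow_succ, mul_dvd_mul_iff_left (pow_ne_zero n hr)]

theorem dvd_of_pow_mul_eq_mul_pow [WfDvdMonoid α] {r u c g : α} {e d : ℕ} (hr : Prime r)
    (hu : ¬ r ∣ u) (hc : ¬ r ∣ c) (h : r ^ e * u = c * g ^ d) : d ∣ e := by
  have hne : c * g ^ d ≠ 0 :=
    h ▸ mul_ne_zero (pow_ne_zero _ hr.ne_zero) fun hu0 => hu (hu0 ▸ dvd_zero r)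
  have : Nontrivial α := ⟨⟨r, 0, hr.ne_zero⟩⟩
  obtain ⟨g, hg, hgd⟩ : ∃ g' : α, g' ≠ 0 ∧ g ^ d = g' ^ d := by
    rcases eq_or_ne g 0 with rfl | hg
    · obtain rfl : d = 0 := by
        by_contra hd
        exact hne (by rw [zero_pow hd, mul_zero])
      exact ⟨1, one_ne_zero, by rw [pow_zero, pow_zero]⟩
    · exact ⟨g, hg, rfl⟩
  rw [hgd] at h
  obtain ⟨m, t, hrt, rfl⟩ := WfDvdMonoid.max_power_factor hg hr.irreducible
  have hct : ¬ r ∣ c * t ^ d := fun hdvd =>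
    (hr.dvd_or_dvd hdvd).elim hc fun hdvd => hrt (hr.dvd_of_dvd_pow hdvd)
  have hmul : r ^ e * u = r ^ (m * d) * (c * t ^ d) := by
    rw [h, mul_pow, ← pow_mul, mul_left_comm]
  have hmult := congrArg (emultiplicity r) hmul
  rw [emultiplicity_pow_mul_of_not_dvd hr.ne_zero hu,
    emultiplicity_pow_mul_of_not_dvd hr.ne_zero hct, Nat.cast_inj] at hmult
  exact ⟨m, by rw [hmult, mul_comm]⟩

end Multiplicity

theorem ZMod.intCast_ne_zero_of_natAbs_lt {z : ℤ} {n : ℕ} (hz : z ≠ 0) (hzn : z.natAbs < n) :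
    (z : ZMod n) ≠ 0 := by
  rw [Ne, ZMod.intCast_zmod_eq_zero_iff_dvd]
  exact fun hdvd => hzn.not_ge (Nat.le_of_dvd (Int.natAbs_pos.mpr hz) (Int.natCast_dvd.mp hdvd))

namespace Polynomial

theorem dvd_of_pow_mul_eq_C_mul_pow {K : Type*} [Field K] {Q H g : K[X]} {a : K} {e d : ℕ}
    (hQ : Squarefree Q) (hQu : ¬ IsUnit Q) (hQH : IsCoprime Q H)
    (h : Q ^ e * H = C a * g ^ d) : d ∣ e := by
  have hH : H ≠ 0 := by
    rintro rfl
    exact hQu (isCoprime_zero_right.mp hQH)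
  have ha : a ≠ 0 := by
    rintro rfl
    rw [C_0, zero_mul] at h
    exact mul_ne_zero (pow_ne_zero _ hQ.ne_zero) hH h
  obtain ⟨r, hr, s, rfl⟩ := WfDvdMonoid.exists_irreducible_factor hQu hQ.ne_zero
  have hrs : ¬ r ∣ s := fun ⟨t, ht⟩ => hr.not_isUnit (hQ r ⟨t, by rw [ht, mul_assoc]⟩)
  have hrH : ¬ r ∣ H := fun hrH => hr.not_isUnit (hQH.isUnit_of_dvd' (dvd_mul_right r s) hrH)
  refine dvd_of_pow_mul_eq_mul_pow hr.prime (u := s ^ e * H) ?_ ?_ (by rw [← h]; ring)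
  · exact fun hdvd => (hr.prime.dvd_or_dvd hdvd).elim
      (fun hdvd => hrs (hr.prime.dvd_of_dvd_pow hdvd)) hrH
  · exact fun hdvd => hr.not_isUnit (isUnit_of_dvd_unit hdvd (isUnit_C.mpr ha.isUnit))

section Factorization

variable {R : Type*} [CommRing R] [IsDomain R] [NormalizationMonoid R[X]]
  [UniqueFactorizationMonoid R[X]]

theorem exists_eq_C_mul_pow_of_dvd_count [DecidableEq R[X]] {f : R[X]} (hf : f ≠ 0) {d : ℕ}
    (h : ∀ q ∈ normalizedFactors f, 0 < q.natDegree → d ∣ (normalizedFactors f).count q) :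
    ∃ a g, f = C a * g ^ d := by
  set s := normalizedFactors f
  obtain ⟨t, ht⟩ := Multiset.exists_smul_of_dvd_count (k := d) (s.filter (0 < natDegree ·))
    fun q hq => by
      obtain ⟨hqs, hq⟩ := Multiset.mem_filter.mp hq
      rw [Multiset.count_filter_of_pos (p := fun x : R[X] => 0 < x.natDegree) hq]
      exact h q hqs hq
  have hconst : (s.filter (¬ 0 < natDegree ·)).prod.natDegree = 0 := by
    refine Nat.eq_zero_of_le_zero ((natDegree_multiset_prod_le _).trans_eq ?_)
    refine Multiset.sum_eq_zero fun n hn => ?_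
    obtain ⟨q, hq, rfl⟩ := Multiset.mem_map.mp hn
    exact Nat.eq_zero_of_not_pos (Multiset.mem_filter.mp hq).2
  obtain ⟨u, hu⟩ := prod_normalizedFactors hf
  obtain ⟨c, -, hc⟩ := isUnit_iff.mp u.isUnit
  refine ⟨(s.filter (¬ 0 < natDegree ·)).prod.coeff 0 * c, t.prod, ?_⟩
  rw [← hu, ← Multiset.prod_filter_mul_prod_filter_not (0 < natDegree ·), ht,
    Multiset.prod_nsmul, eq_C_of_natDegree_eq_zero hconst, coeff_C_zero, ← hc, C_mul]
  ring

theorem exists_irreducible_pow_mul_of_not_exists_C_mul_pow {f : R[X]} {d : ℕ}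
    (hf : ¬ ∃ a g, f = C a * g ^ d) :
    ∃ q e h, Irreducible q ∧ 0 < q.natDegree ∧ f = q ^ e * h ∧ ¬ q ∣ h ∧ ¬ d ∣ e := by
  classical
  have hf0 : f ≠ 0 := by
    rintro rfl
    exact hf ⟨0, 0, by simp⟩
  by_contra! hcon
  refine hf (exists_eq_C_mul_pow_of_dvd_count hf0 fun q hq hdeg => ?_)
  have hqirr := irreducible_of_normalized_factor q hq
  obtain ⟨e, h, hqh, hfe⟩ := WfDvdMonoid.max_power_factor hf0 hqirr
  have hmax : ¬ q ^ (e + 1) ∣ f := by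
    rwa [hfe, pow_succ, mul_dvd_mul_iff_left (pow_ne_zero _ hqirr.ne_zero)]
  rw [count_normalizedFactors_eq hqirr (normalize_normalized_factor q hq) ⟨h, hfe⟩ hmax]
  exact hcon q e h hqirr hdeg hfe hqh

end Factorization

theorem exists_mul_add_mul_eq_C_of_isCoprime_map {R K : Type*} [CommRing R] [CommRing K]
    [IsDomain K] {φ : R →+* K} (hφ : Function.Injective φ) {A B : R[X]} (hA : 0 < A.natDegree)
    (h : IsCoprime (A.map φ) (B.map φ)) : ∃ U V : R[X], ∃ N : R, N ≠ 0 ∧ A * U + B * V = C N := by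
  obtain ⟨U, V, -, -, hUV⟩ := exists_mul_add_mul_eq_C_resultant A B le_rfl le_rfl (Or.inl hA.ne')
  refine ⟨U, V, _, fun h0 => resultant_ne_zero _ _ h ?_, hUV⟩
  rw [natDegree_map_eq_of_injective hφ A, natDegree_map_eq_of_injective hφ B, resultant_map_map,
    h0, map_zero]

theorem isCoprime_map_of_mul_add_mul_eq_C {R K : Type*} [CommRing R] [Field K] (φ : R →+* K)
    {A B U V : R[X]} {N : R} (h : A * U + B * V = C N) (hN : φ N ≠ 0) :
    IsCoprime (A.map φ) (B.map φ) := by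
  refine ⟨C (φ N)⁻¹ * U.map φ, C (φ N)⁻¹ * V.map φ, ?_⟩
  have hmap := congrArg (map φ) h
  rw [Polynomial.map_add, Polynomial.map_mul, Polynomial.map_mul, map_C] at hmap
  calc C (φ N)⁻¹ * U.map φ * A.map φ + C (φ N)⁻¹ * V.map φ * B.map φ
      = C (φ N)⁻¹ * (A.map φ * U.map φ + B.map φ * V.map φ) := by ring
    _ = 1 := by rw [hmap, ← C_mul, inv_mul_cancel₀ hN, C_1]

theorem isCoprime_map_fraction_map_of_not_dvd {R K : Type*} [CommRing R] [IsDomain R]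
    [IsGCDMonoid R] [Field K] [Algebra R K] [IsFractionRing R K] {q h : R[X]}
    (hq : Irreducible q) (hdeg : 0 < q.natDegree) (hqh : ¬ q ∣ h) :
    IsCoprime (q.map (algebraMap R K)) (h.map (algebraMap R K)) :=
  have hprim := hq.isPrimitive hdeg.ne'
  (hprim.irreducible_iff_irreducible_map_fraction_map.mp hq).coprime_iff_not_dvd.mpr
    fun hdvd => hqh (hprim.dvd_of_fraction_map_dvd_fraction_map hdvd)

end Polynomial

theorem stmt7_general (d : ℕ) (f : Polynomial ℤ)
    (hf : ¬ ∃ (a : ℤ) (g : Polynomial ℤ), f = C a * g ^ d) :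
    ∃ M : ℕ, ∀ p : ℕ, p.Prime → M < p →
      ¬ ∃ (a : ZMod p) (g : Polynomial (ZMod p)),
        f.map (Int.castRingHom (ZMod p)) = C a * g ^ d := by
  obtain ⟨q, e, h, hq, hqdeg, rfl, hqh, hde⟩ :=
    exists_irreducible_pow_mul_of_not_exists_C_mul_pow hf
  have hqQ : Irreducible (q.map (algebraMap ℤ ℚ)) :=
    (hq.isPrimitive hqdeg.ne').irreducible_iff_irreducible_map_fraction_map.mp hq
  obtain ⟨U₁, V₁, N₁, hN₁, hqh'⟩ := exists_mul_add_mul_eq_C_of_isCoprime_map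
    (IsFractionRing.injective ℤ ℚ) hqdeg (isCoprime_map_fraction_map_of_not_dvd hq hqdeg hqh)
  obtain ⟨U₂, V₂, N₂, hN₂, hqq'⟩ := exists_mul_add_mul_eq_C_of_isCoprime_map
    (IsFractionRing.injective ℤ ℚ) hqdeg (by rw [← derivative_map]; exact hqQ.separable)
  refine ⟨(N₁ * N₂ * q.leadingCoeff).natAbs, fun p hp hpM ⟨a, g, hag⟩ => hde ?_⟩
  have : Fact p.Prime := ⟨hp⟩
  set φ := Int.castRingHom (ZMod p)
  have hN := ZMod.intCast_ne_zero_of_natAbs_lt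
    (mul_ne_zero (mul_ne_zero hN₁ hN₂) (leadingCoeff_ne_zero.mpr hq.ne_zero)) hpM
  rw [Int.cast_mul, Int.cast_mul, mul_ne_zero_iff, mul_ne_zero_iff] at hN
  obtain ⟨⟨hN₁p, hN₂p⟩, hqp⟩ := hN
  refine dvd_of_pow_mul_eq_C_mul_pow (Q := q.map φ) ?_ ?_
    (isCoprime_map_of_mul_add_mul_eq_C φ hqh' hN₁p)
    (by rw [← hag, Polynomial.map_mul, Polynomial.map_pow])
  · have hsep : (q.map φ).Separable := by
      rw [Separable, derivative_map]
      exact isCoprime_map_of_mul_add_mul_eq_C φ hqq' hN₂p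
    exact hsep.squarefree
  · refine not_isUnit_of_natDegree_pos _ ?_
    rwa [natDegree_map_of_leadingCoeff_ne_zero φ hqp]

theorem stmt7 (d : ℕ) (hd : 1 < d) (f : Polynomial ℤ)
    (hf : ¬ ∃ (a : ℤ) (g : Polynomial ℤ), f = C a * g ^ d) :
    ∃ M : ℕ, ∀ p : ℕ, p.Prime → M < p →
      ¬ ∃ (a : ZMod p) (g : Polynomial (ZMod p)),
        f.map (Int.castRingHom (ZMod p)) = C a * g ^ d :=
  stmt7_general d f hf
end

section
/- Let q = p^n with p prime, let θ be a generator of F_q^*, let V ⊆ F_q be a t-dimensional F_p-affine subspace with t ≥ 1, and let d > 1 be a divisor of q−1. For a ∈ {0,...,d−1}, let V_{a(d)} be the number of nonzero v ∈ V such that log_θ v ≡ a (mod d). Then |V_{a(d)} − p^t/d| < p^{n/2}. In particular, if p^{t−n/2} ≥ d then V_{a(d)} > 0. -/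
/-!
Choose a multiplicative character `χ` of `F` with `χ θ = ω` a primitive `d`-th root of unity.
Orthogonality of the powers of `ω` gives
`d · V_{a(d)} = ∑_{j < d} ω^{-aj} ∑_{v ∈ V} χ^j(v)`.
The term `j = 0` differs from `|V| = p^t` by at most one (the point `v = 0`), and for `0 < j < d`
the character `χ^j` is nontrivial. Writing `V = c + H` and expanding the indicator of `H` in
additive characters gives `q · ∑_{h ∈ H} χ(c + h) = ∑_b Ĥ(b) ψ(bc) G(χ, ψ_{-b})` with
`Ĥ(b) = ∑_{h ∈ H} ψ(bh)`; every Gauss sum has absolute value at most `√q`, and `∑_b |Ĥ(b)| = q`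
because `Ĥ(b)` is `|H|` or `0`. So each nontrivial sum has absolute value at most `√q`, and `|d · V_{a(d)} - p^t| ≤ 1 + (d - 1)√q < d√q`.
-/

open Finset

lemma natCard_setOf_exists_add_and {G : Type*} [AddGroup G] (H : AddSubgroup G) (c : G)
    (P : G → Prop) :
    Nat.card {x : G | (∃ h ∈ H, x = c + h) ∧ P x} = Nat.card {h : H // P (c + h)} :=
  Nat.card_congr
    { toFun := fun x => ⟨⟨-c + x.1, by obtain ⟨⟨h, hh, hx⟩, -⟩ := x.2; simpa [hx] using hh⟩,
        by simpa using x.2.2⟩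
      invFun := fun h => ⟨c + h.1, ⟨h.1, h.1.2, rfl⟩, h.2⟩
      left_inv := fun x => by simp
      right_inv := fun h => by simp }

section GaussSum

variable {F : Type*} [Field F] [Fintype F]

lemma AddChar.exists_isPrimitive_complex : ∃ ψ : AddChar F ℂ, ψ.IsPrimitive := by
  obtain ⟨ψ, hψ⟩ := AddChar.exists_apply_ne_zero.2 (one_ne_zero : (1 : F) ≠ 0)
  exact ⟨ψ, AddChar.IsPrimitive.of_ne_one fun h => hψ (by rw [h, AddChar.one_apply])⟩

lemma norm_gaussSum_eq_sqrt_card {χ : MulChar F ℂ} (hχ : χ ≠ 1) {ψ : AddChar F ℂ}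
    (hψ : ψ.IsPrimitive) : ‖gaussSum χ ψ‖ = √(Fintype.card F) := by
  have h := gaussSum_mul_gaussSum_eq_card hχ hψ
  rw [← star_gaussSum_eq, RCLike.star_def, Complex.mul_conj, Complex.normSq_eq_norm_sq] at h
  have h' : ‖gaussSum χ ψ‖ ^ 2 = Fintype.card F := by exact_mod_cast h
  rw [← h', Real.sqrt_sq (norm_nonneg _)]

lemma norm_gaussSum_mulShift_le {χ : MulChar F ℂ} (hχ : χ ≠ 1) {ψ : AddChar F ℂ}
    (hψ : ψ.IsPrimitive) (b : F) : ‖gaussSum χ (ψ.mulShift b)‖ ≤ √(Fintype.card F) := by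
  rcases eq_or_ne b 0 with rfl | hb
  · rw [AddChar.mulShift_zero, gaussSum_one_right hχ, norm_zero]
    positivity
  · exact (norm_gaussSum_eq_sqrt_card hχ (AddChar.IsPrimitive.of_ne_one (hψ hb))).le

end GaussSum

section SubgroupSums

variable {F : Type*} [Field F] (H : AddSubgroup F) [Fintype H]

lemma exists_sum_addChar_mul_eq_natCast (ψ : AddChar F ℂ) (b : F) :
    ∃ k : ℕ, ∑ h : H, ψ (b * h) = k := by
  classical
  have := AddChar.sum_eq_ite ((ψ.mulShift b).compAddMonoidHom H.subtype)
  simp only [AddChar.compAddMonoidHom_apply, AddSubgroup.coe_subtype,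
    AddChar.mulShift_apply] at this
  rw [this]
  split_ifs
  exacts [⟨_, rfl⟩, ⟨0, Nat.cast_zero.symm⟩]

lemma norm_sum_one_apply_add_sub_card_le (c : F) :
    ‖∑ h : H, (1 : MulChar F ℂ) (c + h) - Fintype.card H‖ ≤ 1 := by
  classical
  have hone : ∀ x : F, (1 : MulChar F ℂ) x = 1 - if x = 0 then 1 else 0 := fun x => by
    rcases eq_or_ne x 0 with rfl | hx
    · simp [MulChar.map_zero]
    · rw [MulChar.one_apply hx.isUnit, if_neg hx, sub_zero]
  have hsub : Subsingleton {h : H // c + h = 0} :=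
    ⟨fun h₁ h₂ => Subtype.ext <| Subtype.ext <| add_left_cancel (h₁.2.trans h₂.2.symm)⟩
  simp_rw [hone, Finset.sum_sub_distrib, Finset.sum_boole]
  rw [Finset.sum_const, Finset.card_univ, nsmul_one, sub_sub_cancel_left, norm_neg,
    Complex.norm_natCast, ← Fintype.card_subtype]
  exact_mod_cast Fintype.card_le_one_iff_subsingleton.2 hsub

lemma sum_norm_sum_addChar_mul [Fintype F] {ψ : AddChar F ℂ} (hψ : ψ.IsPrimitive) :
    ∑ b : F, ‖∑ h : H, ψ (b * h)‖ = Fintype.card F := by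
  classical
  have hnorm : ∀ b : F, (‖∑ h : H, ψ (b * h)‖ : ℂ) = ∑ h : H, ψ (b * h) := fun b => by
    obtain ⟨k, hk⟩ := exists_sum_addChar_mul_eq_natCast H ψ b
    rw [hk, Complex.norm_natCast, Complex.ofReal_natCast]
  apply Complex.ofReal_injective
  push_cast
  simp_rw [hnorm]
  rw [Finset.sum_comm]
  simp_rw [AddChar.sum_mulShift _ hψ]
  simp

variable [Fintype F]

lemma card_mul_sum_mulChar_add {ψ : AddChar F ℂ} (hψ : ψ.IsPrimitive) (χ : MulChar F ℂ)
    (c : F) :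
    Fintype.card F * ∑ h : H, χ (c + h) =
      ∑ b : F, (∑ h : H, ψ (b * h)) * ψ (b * c) * gaussSum χ (ψ.mulShift (-b)) := by
  classical
  have hdelta : ∀ (h : H) (x : F), ∑ b : F, ψ (b * (c + h - x)) =
      if c + h = x then (Fintype.card F : ℂ) else 0 := fun h x => by
    rw [AddChar.sum_mulShift _ hψ, sub_eq_zero]
    push_cast
    rfl
  calc (Fintype.card F : ℂ) * ∑ h : H, χ (c + h)
      = ∑ h : H, ∑ x : F, χ x * ∑ b : F, ψ (b * (c + h - x)) := by
        simp_rw [hdelta, mul_ite, mul_zero, Finset.sum_ite_eq, Finset.mem_univ, if_true,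
          Finset.mul_sum, mul_comm]
    _ = ∑ h : H, ∑ b : F, ∑ x : F, ψ (b * h) * ψ (b * c) * (χ x * ψ (-b * x)) := by
        simp_rw [Finset.mul_sum]
        refine Finset.sum_congr rfl fun h _ => Finset.sum_comm.trans <|
          Finset.sum_congr rfl fun b _ => Finset.sum_congr rfl fun x _ => ?_
        rw [show b * (c + h - x) = b * h + b * c + -b * x by ring, AddChar.map_add_eq_mul,
          AddChar.map_add_eq_mul]
        ring
    _ = _ := by
        rw [Finset.sum_comm]
        simp only [gaussSum, AddChar.mulShift_apply, Finset.sum_mul, Finset.mul_sum]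
        exact Finset.sum_congr rfl fun _ _ => Finset.sum_comm

lemma norm_sum_mulChar_add_le {χ : MulChar F ℂ} (hχ : χ ≠ 1) (c : F) :
    ‖∑ h : H, χ (c + h)‖ ≤ √(Fintype.card F) := by
  obtain ⟨ψ, hψ⟩ := AddChar.exists_isPrimitive_complex (F := F)
  have hq : (0 : ℝ) < Fintype.card F := Nat.cast_pos.2 Fintype.card_pos
  refine le_of_mul_le_mul_left ?_ hq
  calc (Fintype.card F : ℝ) * ‖∑ h : H, χ (c + h)‖
      = ‖∑ b : F, (∑ h : H, ψ (b * h)) * ψ (b * c) * gaussSum χ (ψ.mulShift (-b))‖ := by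
        rw [← card_mul_sum_mulChar_add H hψ, norm_mul, Complex.norm_natCast]
    _ ≤ ∑ b : F, ‖∑ h : H, ψ (b * h)‖ * √(Fintype.card F) := by
        refine (norm_sum_le _ _).trans (Finset.sum_le_sum fun b _ => ?_)
        rw [norm_mul, norm_mul, AddChar.norm_apply, mul_one]
        exact mul_le_mul_of_nonneg_left (norm_gaussSum_mulShift_le hχ hψ _) (norm_nonneg _)
    _ = Fintype.card F * √(Fintype.card F) := by
        rw [← Finset.sum_mul, sum_norm_sum_addChar_mul H hψ]

end SubgroupSums

section ResidueCount

variable {F : Type*} [Field F] {θ : Fˣ} {d : ℕ} {χ : MulChar F ℂ}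

lemma geom_sum_eq_ite_of_pow_eq_one {K : Type*} [Field K] [DecidableEq K] {z : K}
    (hz : z ^ d = 1) :
    ∑ j ∈ range d, z ^ j = if z = 1 then (d : K) else 0 := by
  split_ifs with h
  · simp [h]
  · rw [geom_sum_eq h, hz, sub_self, zero_div]

lemma MulChar.pow_ne_one_of_isPrimitiveRoot_apply {u : Fˣ} (hχ : IsPrimitiveRoot (χ u) d)
    {j : ℕ} (hj0 : j ≠ 0) (hjd : j < d) : χ ^ j ≠ 1 := by
  intro h
  have hu := congrArg (· (u : F)) h
  simp only [MulChar.pow_apply_coe, MulChar.one_apply_coe] at hu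
  exact hχ.pow_ne_one_of_pos_of_lt hj0 hjd hu

variable [Fintype F]

lemma ne_zero_of_dvd_card_sub_one (hd : d ∣ Fintype.card F - 1) : d ≠ 0 := by
  rintro rfl
  have := Fintype.one_lt_card (α := F)
  omega

lemma exists_mulChar_isPrimitiveRoot_apply (hθ : ∀ x, x ∈ Subgroup.zpowers θ)
    (hd : d ∣ Fintype.card F - 1) : ∃ χ : MulChar F ℂ, IsPrimitiveRoot (χ θ) d := by
  classical
  have hd0 := ne_zero_of_dvd_card_sub_one hd
  have hω := Complex.isPrimitiveRoot_exp d hd0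
  have hmem : (hω.isUnit hd0).unit ∈ rootsOfUnity (Fintype.card Fˣ) ℂ := by
    rw [mem_rootsOfUnity, Units.ext_iff, Units.val_pow_eq_pow_val, IsUnit.unit_spec,
      Units.val_one, hω.pow_eq_one_iff_dvd, Fintype.card_units]
    exact hd
  exact ⟨MulChar.ofRootOfUnity hmem hθ, by rw [MulChar.ofRootOfUnity_spec]; exact hω⟩

lemma exists_pow_eq_and_mod_eq_iff (hθ : ∀ x, x ∈ Subgroup.zpowers θ)
    (hχ : IsPrimitiveRoot (χ θ) d) (u : Fˣ) (a : ℕ) :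
    (∃ i : ℕ, (θ : F) ^ i = u ∧ i % d = a % d) ↔ χ u = χ θ ^ a := by
  classical
  have hfin : IsOfFinOrder (χ θ) := by
    refine hχ.isOfFinOrder fun hd => ?_
    subst hd
    have := hχ.dvd_of_pow_eq_one (Fintype.card Fˣ) (by
      rw [← map_pow, ← Units.val_pow_eq_pow_val, pow_card_eq_one, Units.val_one, map_one])
    exact Fintype.card_ne_zero (Nat.eq_zero_of_zero_dvd this)
  have hmod : ∀ i : ℕ, χ θ ^ i = χ θ ^ a ↔ i % d = a % d := fun i => by
    rw [hfin.pow_inj_mod, ← hχ.eq_orderOf]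
  have hpow : ∀ i : ℕ, (θ : F) ^ i = u → χ u = χ θ ^ i := fun i hi => by
    rw [← hi, map_pow]
  constructor
  · rintro ⟨i, hi, hia⟩
    rw [hpow i hi, hmod, hia]
  · intro hu
    obtain ⟨i, hi⟩ := mem_powers_iff_mem_zpowers.2 (hθ u)
    have hi' : (θ : F) ^ i = u := by rw [← Units.val_pow_eq_pow_val]; exact congrArg Units.val hi
    exact ⟨i, hi', (hmod i).1 (by rw [← hpow i hi', hu])⟩

open Classical in
lemma natCast_mul_ite_eq_sum_pow_apply (hθ : ∀ x, x ∈ Subgroup.zpowers θ)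
    (hχ : IsPrimitiveRoot (χ θ) d) (x : F) (a : ℕ) :
    (d : ℂ) * (if x ≠ 0 ∧ ∃ i : ℕ, (θ : F) ^ i = x ∧ i % d = a % d then 1 else 0) =
      ∑ j ∈ range d, (χ θ ^ a)⁻¹ ^ j * (χ ^ j) x := by
  rcases eq_or_ne x 0 with rfl | hx
  · simp [MulChar.map_zero]
  obtain ⟨u, rfl⟩ := hx.isUnit
  obtain ⟨i, hi⟩ := mem_powers_iff_mem_zpowers.2 (hθ u)
  have hχu : χ u = χ θ ^ i := by rw [← hi, Units.val_pow_eq_pow_val, map_pow]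
  have hz : ((χ θ ^ a)⁻¹ * χ u) ^ d = 1 := by
    rw [hχu, mul_pow, inv_pow, ← pow_mul, ← pow_mul, pow_mul', pow_mul' _ i, hχ.pow_eq_one,
      one_pow, one_pow, inv_one, one_mul]
  have hne : χ θ ^ a ≠ 0 := pow_ne_zero _ (θ.isUnit.map χ).ne_zero
  simp_rw [MulChar.pow_apply_coe, ← mul_pow, geom_sum_eq_ite_of_pow_eq_one hz,
    inv_mul_eq_one₀ hne, eq_comm (a := χ θ ^ a), ← exists_pow_eq_and_mod_eq_iff hθ hχ u a]
  simp only [ne_eq, u.ne_zero, not_false_eq_true, true_and, mul_ite, mul_one, mul_zero]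

lemma abs_mul_natCard_sub_natCard_lt (H : AddSubgroup F) (c : F)
    (hθ : ∀ x, x ∈ Subgroup.zpowers θ) (hd : d ∣ Fintype.card F - 1) (a : ℕ) :
    |(d : ℝ) * Nat.card {h : H // c + h ≠ 0 ∧ ∃ i : ℕ, (θ : F) ^ i = c + h ∧ i % d = a % d} -
      Nat.card H| < d * √(Fintype.card F) := by
  classical
  obtain ⟨χ, hχ⟩ := exists_mulChar_isPrimitiveRoot_apply hθ hd
  have hd0 := ne_zero_of_dvd_card_sub_one hd
  set ω := (χ θ ^ a)⁻¹ with hω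
  set S : ℕ → ℂ := fun j => ∑ h : H, (χ ^ j) (c + h) with hS
  have hcount : (d : ℂ) * Nat.card {h : H // c + h ≠ 0 ∧
      ∃ i : ℕ, (θ : F) ^ i = c + h ∧ i % d = a % d} = ∑ j ∈ range d, ω ^ j * S j := by
    rw [Nat.card_eq_fintype_card, Fintype.card_subtype, Finset.card_filter, Nat.cast_sum,
      Finset.mul_sum]
    simp_rw [Nat.cast_ite, Nat.cast_one, Nat.cast_zero,
      natCast_mul_ite_eq_sum_pow_apply hθ hχ, hS, Finset.mul_sum]
    exact Finset.sum_comm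
  have hSj : ∀ j ∈ Ico 1 d, ‖ω ^ j * S j‖ ≤ √(Fintype.card F) := fun j hj => by
    obtain ⟨hj1, hjd⟩ := Finset.mem_Ico.1 hj
    rw [norm_mul, norm_pow, hω, norm_inv, norm_pow, hχ.norm'_eq_one hd0, one_pow, inv_one,
      one_pow, one_mul]
    exact norm_sum_mulChar_add_le H (MulChar.pow_ne_one_of_isPrimitiveRoot_apply hχ
      (by omega) hjd) c
  have hq : 1 < √(Fintype.card F) := by
    rw [Real.lt_sqrt zero_le_one, one_pow]
    exact_mod_cast Fintype.one_lt_card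
  rw [← Real.norm_eq_abs, ← Complex.norm_real, Nat.card_eq_fintype_card (α := H)]
  push_cast
  rw [hcount, Finset.range_eq_Ico, Finset.sum_eq_sum_Ico_succ_bot (Nat.pos_of_ne_zero hd0),
    add_sub_right_comm]
  calc _ ≤ ‖ω ^ 0 * S 0 - Fintype.card H‖ + ∑ j ∈ Ico 1 d, ‖ω ^ j * S j‖ :=
        (norm_add_le _ _).trans (add_le_add_right (norm_sum_le _ _) _)
    _ ≤ 1 + ∑ j ∈ Ico 1 d, √(Fintype.card F) := by
        gcongr with j hj
        · rw [pow_zero, one_mul]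
          exact norm_sum_one_apply_add_sub_card_le H c
        · exact hSj j hj
    _ < d * √(Fintype.card F) := by
        rw [Finset.sum_const, Nat.card_Ico, nsmul_eq_mul, Nat.cast_sub (Nat.pos_of_ne_zero hd0)]
        push_cast
        nlinarith

end ResidueCount

theorem stmt14_general {F : Type*} [Field F] [Fintype F] (p n : ℕ) (hp : p.Prime)
    [Algebra (ZMod p) F] (hcard : Fintype.card F = p ^ n)
    (θ : Fˣ) (hθ : ∀ x : Fˣ, x ∈ Subgroup.zpowers θ)
    (t : ℕ)
    (W : Submodule (ZMod p) F) (hW : Module.finrank (ZMod p) W = t)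
    (c : F) (V : Set F) (hV : V = {x : F | ∃ w ∈ W, x = c + w})
    (d : ℕ) (hd : 1 < d) (hdvd : d ∣ p ^ n - 1)
    (a : ℕ)
    (Vad : ℕ)
    (hVad : Vad = Nat.card {v : F | v ∈ V ∧ v ≠ 0 ∧
      ∃ i : ℕ, (θ : F) ^ i = v ∧ i % d = a % d}) :
    |(Vad : ℝ) - (p : ℝ) ^ t / d| < (p : ℝ) ^ ((n : ℝ) / 2) ∧
    ((d : ℝ) ≤ (p : ℝ) ^ ((t : ℝ) - (n : ℝ) / 2) → 0 < Vad) := by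
  have hp0 : (0 : ℝ) < p := Nat.cast_pos.2 hp.pos
  have hd0 : (0 : ℝ) < d := by positivity
  have hVad' : Vad = Nat.card {w : W.toAddSubgroup // c + w ≠ 0 ∧
      ∃ i : ℕ, (θ : F) ^ i = c + w ∧ i % d = a % d} := by
    subst hV hVad
    exact natCard_setOf_exists_add_and W.toAddSubgroup c _
  have hWcard : Nat.card W.toAddSubgroup = p ^ t := by
    have : Fact p.Prime := ⟨hp⟩
    have := Module.natCard_eq_pow_finrank (K := ZMod p) (V := W)
    rwa [Nat.card_zmod, hW] at this
  have hsqrt : √(Fintype.card F : ℝ) = p ^ ((n : ℝ) / 2) := by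
    rw [hcard, Real.sqrt_eq_rpow, Nat.cast_pow, ← Real.rpow_natCast, ← Real.rpow_mul hp0.le]
    ring_nf
  have key := abs_mul_natCard_sub_natCard_lt W.toAddSubgroup c hθ (hcard ▸ hdvd) a
  rw [← hVad', hWcard, hsqrt] at key
  have hbound : |(Vad : ℝ) - p ^ t / d| < p ^ ((n : ℝ) / 2) := by
    rw [show (Vad : ℝ) - p ^ t / d = (d * Vad - p ^ t) / d by field_simp, abs_div,
      abs_of_pos hd0, div_lt_iff₀ hd0]
    push_cast at key
    linarith
  refine ⟨hbound, fun hle => ?_⟩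
  have hsmall : (p : ℝ) ^ ((n : ℝ) / 2) ≤ p ^ t / d := by
    rw [le_div_iff₀ hd0, ← Real.rpow_natCast _ t,
      show (t : ℝ) = n / 2 + (t - n / 2) by ring, Real.rpow_add hp0]
    exact mul_le_mul_of_nonneg_left hle (by positivity)
  have hpos : (0 : ℝ) < Vad := by linarith [(abs_lt.1 hbound).1]
  exact_mod_cast hpos

theorem stmt14 {F : Type*} [Field F] [Fintype F] (p n : ℕ) (hp : p.Prime) (hn : 0 < n)
    [Algebra (ZMod p) F] (hcard : Fintype.card F = p ^ n)
    (θ : Fˣ) (hθ : ∀ x : Fˣ, x ∈ Subgroup.zpowers θ)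
    (t : ℕ) (ht1 : 1 ≤ t)
    (W : Submodule (ZMod p) F) (hW : Module.finrank (ZMod p) W = t)
    (c : F) (V : Set F) (hV : V = {x : F | ∃ w ∈ W, x = c + w})
    (d : ℕ) (hd : 1 < d) (hdvd : d ∣ p ^ n - 1)
    (a : ℕ) (ha : a < d)
    (Vad : ℕ)
    (hVad : Vad = Nat.card {v : F | v ∈ V ∧ v ≠ 0 ∧
      ∃ i : ℕ, (θ : F) ^ i = v ∧ i % d = a % d}) :
    |(Vad : ℝ) - (p : ℝ) ^ t / d| < (p : ℝ) ^ ((n : ℝ) / 2) ∧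
    ((d : ℝ) ≤ (p : ℝ) ^ ((t : ℝ) - (n : ℝ) / 2) → 0 < Vad) :=
  stmt14_general p n hp hcard θ hθ t W hW c V hV d hd hdvd a Vad hVad
end
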